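/- Let c ∈ ℕ and let the weighted system (N,R,wt,K) be c-closed. For every l ∈ ℕ, every nonterminal A ∈ N, and every B ⊆ (T_R)_A \ T_R^{(c)} with |B| = l the following holds: ⊕_{d ∈ (T_R^{(c)})_A} wt(d)_K = ⊕_{d ∈ (T_R^{(c)})_A ∪ B} wt(d)_K (both are finite ⊕-sums, since T_R^{(c)} is finite and B is finite). -/

import Mathlib

open scoped Classical

/-- Trees over a ranked set `R` with arity function `ar`:
`RT.node r ts` is a tree whose root is labelled `r` and which has `ar r` children. -/
inductive RT (R : Type) (ar : R → ℕ) : Type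
  | node (r : R) (children : Fin (ar r) → RT R ar)

namespace RT

variable {R : Type} {ar : R → ℕ}

/-- The rule labelling the root of a tree. -/
def rootRule : RT R ar → R
  | node r _ => r

/-- The subtree at a position (`none` if the position is not a position of the tree). -/
def subAt : RT R ar → List ℕ → Option (RT R ar)
  | t, [] => some t
  | node r ts, i :: p => if h : i < ar r then subAt (ts ⟨i, h⟩) p else none

/-- Replace the subtree at a position by another tree. -/
def replaceAt : RT R ar → List ℕ → RT R ar → RT R ar
  | _, [], s => s
  | node r ts, i :: p, s => node r fun j => if j.1 = i then replaceAt (ts j) p s else ts j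

/-- The sequence of rule labels from the root to a position, inclusive. -/
def seqTo : RT R ar → List ℕ → Option (List R)
  | node r _, [] => some [r]
  | node r ts, i :: p => if h : i < ar r then (seqTo (ts ⟨i, h⟩) p).map (fun l => r :: l) else none

/-- `p` is a leaf position of `d`, i.e. a valid position with no child positions. -/
def LeafAt (d : RT R ar) (p : List ℕ) : Prop :=
  ∃ t, subAt d p = some t ∧ ar t.rootRule = 0

/-- The height of a tree: `0` on nullary nodes, otherwise `1` plus the maximum height
of the direct subtrees. -/
def height : RT R ar → ℕ
  | node _ ts => Finset.univ.sup fun i => height (ts i) + 1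

end RT

/-- The weight of a tree: evaluate it bottom-up, interpreting each rule `r` by the
operation `wt r`. -/
def wtval {K R : Type} {ar : R → ℕ} (wt : ∀ r : R, (Fin (ar r) → K) → K) : RT R ar → K
  | .node r ts => wt r fun i => wtval wt (ts i)

section Cyclicity

variable {R : Type} {ar : R → ℕ}

/-- A string over `R` is an elementary cycle if it has length `> 1`, its first and last
symbols coincide, and it becomes repetition-free after deleting its last (resp. first)
symbol. -/
def ElementaryCycle (w : List R) : Prop :=
  1 < w.length ∧ w.head? = w.getLast? ∧ w.dropLast.Nodup ∧ w.tail.Nodup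

/-- `ρ` is `(c,w)`-cyclic: `ρ = v₀ w v₁ ⋯ w v_c` (with `c` occurrences of the elementary
cycle `w`) where `w` is not an infix of any `vᵢ`. -/
def CWCyclic (c : ℕ) (w ρ : List R) : Prop :=
  ElementaryCycle w ∧
  ∃ v : ℕ → List R,
    ρ = v 0 ++ (((List.range c).map fun i => w ++ v (i + 1)).flatten) ∧
    ∀ i ≤ c, ¬ w <:+: v i

/-- `ρ` is `c`-cyclic: it is `(c,w)`-cyclic for some elementary cycle `w` and not
`(c',w')`-cyclic for any `c' > c` and elementary cycle `w'`. -/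
def CCyclic (c : ℕ) (ρ : List R) : Prop :=
  (∃ w, CWCyclic c w ρ) ∧ ∀ c', c < c' → ∀ w', ¬ CWCyclic c' w' ρ

/-- The leaf position `p` of `d` is `(c,w)`-cyclic. -/
def LeafCW (c : ℕ) (w : List R) (d : RT R ar) (p : List ℕ) : Prop :=
  RT.LeafAt d p ∧ ∃ ρ, RT.seqTo d p = some ρ ∧ CWCyclic c w ρ

/-- The leaf position `p` of `d` is `c`-cyclic. -/
def LeafC (c : ℕ) (d : RT R ar) (p : List ℕ) : Prop :=
  RT.LeafAt d p ∧ ∃ ρ, RT.seqTo d p = some ρ ∧ CCyclic c ρ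

/-- The tree `d` is `c`-cyclic: some leaf of `d` is `c`-cyclic and no leaf of `d` is
`c'`-cyclic for any `c' > c`. -/
def TreeC (c : ℕ) (d : RT R ar) : Prop :=
  (∃ p, LeafC c d p) ∧ ∀ c', c < c' → ∀ p, ¬ LeafC c' d p

/-- `d ⊢_w d'` : there are positions `p ≤ p'` of `d` whose connecting label sequence is
`w`, and `d'` is obtained by replacing the subtree at `p` by the subtree at `p'`.
(The position `p'` is `p ++ q`.) -/
def CutW (w : List R) (d d' : RT R ar) : Prop :=
  ∃ p q t s, RT.subAt d p = some t ∧ RT.subAt t q = some s ∧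
    RT.seqTo t q = some w ∧ d' = RT.replaceAt d p s

/-- `d ⊢ d'` : `d ⊢_w d'` for some elementary cycle `w`. -/
def Cut (d d' : RT R ar) : Prop := ∃ w, ElementaryCycle w ∧ CutW w d d'

/-- The set of `w`-cutout trees of `d`. -/
def cotreesW (w : List R) (d : RT R ar) : Set (RT R ar) := {d' | Relation.TransGen (CutW w) d d'}

/-- The set of cutout trees of `d`. -/
def cotrees (d : RT R ar) : Set (RT R ar) := {d' | Relation.TransGen Cut d d'}

end Cyclicity

section Rules

variable {N R : Type}

/-- Well-sorted trees over a rule system given by `lhs` and `rhs`: at each node labelled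
`r`, the `i`-th child is a well-sorted tree whose root label has left-hand side equal to
the `i`-th nonterminal of `rhs r`. -/
inductive WellSorted (lhs : R → N) (rhs : R → List N) :
    RT R (fun r => (rhs r).length) → Prop
  | node (r : R) (ts : Fin (rhs r).length → RT R fun r => (rhs r).length)
      (hsort : ∀ i, lhs (ts i).rootRule = (rhs r).get i)
      (hrec : ∀ i, WellSorted lhs rhs (ts i)) : WellSorted lhs rhs (RT.node r ts)

/-- `T_R` : the set of (well-sorted) trees over the rule system. -/
def TRset (lhs : R → N) (rhs : R → List N) : Set (RT R fun r => (rhs r).length) :=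
  {d | WellSorted lhs rhs d}

/-- `(T_R)_A` : the set of trees of sort `A`. -/
def TRA (lhs : R → N) (rhs : R → List N) (A : N) : Set (RT R fun r => (rhs r).length) :=
  {d | WellSorted lhs rhs d ∧ lhs d.rootRule = A}

/-- `T_R^{(c)}` : the set of trees that are `c'`-cyclic for some `c' ≤ c`. -/
def TRcset (lhs : R → N) (rhs : R → List N) (c : ℕ) : Set (RT R fun r => (rhs r).length) :=
  {d | WellSorted lhs rhs d ∧ ∃ c' ≤ c, TreeC c' d}

end Rules

/-- An infinitary sum operation on a commutative monoid `K`, turning it into a complete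
monoid: the sum of the empty family is `0`, the sum of a singleton family is its member,
the sum of a two-element family is the binary sum, and the partition law holds (every
partition of a countable index set `I` into sets indexed by `J` is given by the fibers
of a map `g : I → J`). -/
structure InfSum (K : Type) [AddCommMonoid K] where
  isum : ∀ {I : Type} [Countable I], (I → K) → K
  isum_empty : ∀ {I : Type} [Countable I] (f : I → K), IsEmpty I → isum f = 0
  isum_single : ∀ {I : Type} [Countable I] (f : I → K) (j : I), (∀ i, i = j) → isum f = f j
  isum_pair : ∀ {I : Type} [Countable I] (f : I → K) (j j' : I), j ≠ j' →
    (∀ i, i = j ∨ i = j') → isum f = f j + f j'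
  isum_partition : ∀ {I J : Type} [Countable I] [Countable J] (f : I → K) (g : I → J),
    isum f = isum fun j : J => isum fun i : {i : I // g i = j} => f i.1

section MMonoid

variable {K : Type} [AddCommMonoid K]

/-- A complete monoid is d-complete if, whenever all the partial sums `Σ_{i ≤ n} f i`
eventually equal `k`, the infinitary sum of the family equals `k`. -/
def InfSum.DComplete (S : InfSum K) : Prop :=
  ∀ (k : K) (f : ℕ → K),
    (∃ n₀ : ℕ, ∀ n, n₀ ≤ n → (∑ i ∈ Finset.range (n + 1), f i) = k) → S.isum f = k

/-- A complete monoid is completely idempotent if the infinitary sum of every constant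
family over a nonempty countable index set is that constant. -/
def InfSum.CompletelyIdempotent (S : InfSum K) : Prop :=
  ∀ (I : Type) [Countable I], Nonempty I → ∀ k : K, S.isum (fun _ : I => k) = k

/-- The family `Ω` of operation sets contains all the null (constantly `0`) operations. -/
def HasZeroOps (Ω : ∀ n : ℕ, Set ((Fin n → K) → K)) : Prop :=
  ∀ n : ℕ, (fun _ : Fin n → K => (0 : K)) ∈ Ω n

/-- Distributivity of an M-monoid: every operation in `Ω` distributes over `+` in each
argument, and `0` is absorbing for every operation in `Ω`. -/
def DistributiveOps (Ω : ∀ n : ℕ, Set ((Fin n → K) → K)) : Prop :=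
  ∀ n : ℕ, ∀ ω ∈ Ω n,
    (∀ (x : Fin n → K) (i : Fin n) (a b : K),
      ω (Function.update x i (a + b)) = ω (Function.update x i a) + ω (Function.update x i b)) ∧
    (∀ x : Fin n → K, (∃ i, x i = 0) → ω x = 0)

end MMonoid

/-- The weighted system `(N, R, wt, K)` is `c`-closed: for every well-sorted tree `d` and
elementary cycle `w` such that some leaf position of `d` is `(c+1,w)`-cyclic, the weight
of `d` is subsumed by the (finite) `⊕`-sum of the weights of the `w`-cutout trees of `d`. -/
def CClosed {K : Type} [AddCommMonoid K] {N R : Type} (lhs : R → N) (rhs : R → List N)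
    (wt : ∀ r : R, (Fin (rhs r).length → K) → K) (c : ℕ) : Prop :=
  ∀ d : RT R (fun r => (rhs r).length), WellSorted lhs rhs d →
    ∀ w : List R, ElementaryCycle w → (∃ p, LeafCW (c + 1) w d p) →
      (wtval wt d + ∑ᶠ d' ∈ cotreesW w d, wtval wt d') = ∑ᶠ d' ∈ cotreesW w d, wtval wt d'


/-!
Say that a finite set `G` of trees absorbs `x` if `x ⊕ ⊕_{e ∈ G} wt(e) = ⊕_{e ∈ G} wt(e)`.
Every well-sorted tree `d ∉ T_R^{(c)}` is absorbed by a finite set of smaller trees of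
`T_R^{(c)}` of the same sort, by induction on the size of `d`. If some leaf of `d` is
`(c+1,w)`-cyclic, `c`-closedness says exactly that the `w`-cotrees of `d` absorb it. Otherwise
the leaf of largest cyclic degree has degree at least `c + 2`; removing the root lowers the
degree by at most one, so some child of `d` lies outside `T_R^{(c)}`, and grafting the child's
absorber into `d` absorbs `d` because the operations distribute over `⊕`. In both cases the
absorbing trees are smaller than `d`, so those still outside `T_R^{(c)}` are absorbed in turn.
Absorption survives enlarging the absorbing set and summing, hence all of `B` is absorbed by
`(T_R^{(c)})_A`.
-/

section Cyclicity

variable {R : Type}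

theorem ElementaryCycle.ne_nil {w : List R} (hw : ElementaryCycle w) : w ≠ [] := by
  rintro rfl
  simp [ElementaryCycle] at hw

theorem elementaryCycle_pair (r : R) : ElementaryCycle [r, r] := by
  simp [ElementaryCycle]

inductive Occurs (u : List R) : ℕ → List R → Prop
  | zero (ρ : List R) : Occurs u 0 ρ
  | succ {k : ℕ} (x : List R) {y : List R} : Occurs u k y → Occurs u (k + 1) (x ++ u ++ y)

namespace Occurs

variable {u : List R} {k : ℕ}

theorem append_left {y : List R} (z : List R) : Occurs u k y → Occurs u k (z ++ y)
  | zero _ => zero _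
  | succ x h => by simpa using succ (z ++ x) h

theorem of_suffix {y ρ : List R} (h : Occurs u k y) (hy : y <:+ ρ) : Occurs u k ρ := by
  obtain ⟨z, rfl⟩ := hy
  exact h.append_left z

theorem le_length (hu : u ≠ []) {ρ : List R} (h : Occurs u k ρ) : k ≤ ρ.length := by
  induction h with
  | zero => exact Nat.zero_le _
  | succ x _ ih =>
    have := List.length_pos_iff.mpr hu
    simp only [List.length_append]
    omega

theorem tail (hu : u ≠ []) {r : R} {ρ : List R} (h : Occurs u (k + 1) (r :: ρ)) :
    Occurs u k ρ := by
  generalize hσ : r :: ρ = σ at h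
  obtain _ | ⟨x, hy⟩ := h
  rcases x with _ | ⟨a, x⟩
  · obtain ⟨b, u, rfl⟩ := List.exists_cons_of_ne_nil hu
    simp only [List.nil_append, List.cons_append, List.cons.injEq] at hσ
    rw [hσ.2]
    exact hy.append_left u
  · simp only [List.cons_append, List.append_assoc, List.cons.injEq] at hσ
    rw [hσ.2, ← List.append_assoc]
    exact hy.append_left _

end Occurs

theorem cwCyclic_zero_iff {w ρ : List R} :
    CWCyclic 0 w ρ ↔ ElementaryCycle w ∧ ¬ w <:+: ρ := by
  constructor
  · rintro ⟨hw, v, rfl, hv⟩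
    simpa using ⟨hw, hv 0 le_rfl⟩
  · rintro ⟨hw, hρ⟩
    exact ⟨hw, fun _ => ρ, by simp, fun _ _ => hρ⟩

theorem cwCyclic_succ_iff {k : ℕ} {w ρ : List R} :
    CWCyclic (k + 1) w ρ ↔ ∃ x y, ρ = x ++ w ++ y ∧ ¬ w <:+: x ∧ CWCyclic k w y := by
  constructor
  · rintro ⟨hw, v, rfl, hv⟩
    refine ⟨v 0, v 1 ++ ((List.range k).map fun i => w ++ v (i + 2)).flatten, ?_, hv 0 (by omega),
      hw, fun i => v (i + 1), rfl, fun i hi => hv (i + 1) (by omega)⟩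
    simp [List.range_succ_eq_map, Function.comp_def]
  · rintro ⟨x, y, rfl, hx, hw, v, rfl, hv⟩
    refine ⟨hw, fun | 0 => x | i + 1 => v i, ?_, ?_⟩
    · simp [List.range_succ_eq_map, Function.comp_def]
    · rintro (_ | i) hi
      · exact hx
      · exact hv i (by omega)

theorem CWCyclic.occurs {k : ℕ} {w ρ : List R} (h : CWCyclic k w ρ) : Occurs w k ρ := by
  induction k generalizing ρ with
  | zero => exact .zero ρ
  | succ k ih =>
    obtain ⟨x, y, rfl, -, hy⟩ := cwCyclic_succ_iff.mp h
    exact .succ x (ih hy)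

theorem CWCyclic.le_length {k : ℕ} {w ρ : List R} (h : CWCyclic k w ρ) : k ≤ ρ.length :=
  h.occurs.le_length h.1.ne_nil

theorem exists_leftmost_occurrence {u : List R} (hu : u ≠ []) :
    ∀ {ρ : List R}, u <:+: ρ → ∃ x y, ρ = x ++ u ++ y ∧ ¬ u <:+: x ∧
      ∀ x' y', ρ = x' ++ u ++ y' → y' <:+ y
  | [], h => absurd (List.eq_nil_of_infix_nil h) hu
  | a :: ρ, h => by
    by_cases hpre : u <+: a :: ρ
    · obtain ⟨y, hy⟩ := hpre
      refine ⟨[], y, by simp [hy], fun hnil => hu (List.eq_nil_of_infix_nil hnil), ?_⟩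
      intro x' y' heq
      refine List.suffix_of_suffix_length_le ⟨x' ++ u, by simp [heq]⟩ ⟨u, hy⟩ ?_
      have h1 := congrArg List.length heq
      have h2 := congrArg List.length hy
      simp only [List.length_append] at h1 h2
      omega
    · obtain ⟨x, y, rfl, hx, hmin⟩ :=
        exists_leftmost_occurrence hu ((List.infix_cons_iff.mp h).resolve_left hpre)
      refine ⟨a :: x, y, rfl, ?_, ?_⟩
      · intro hinf
        rcases List.infix_cons_iff.mp hinf with hpre' | hinf
        · exact hpre (hpre'.trans ⟨u ++ y, by simp⟩)
        · exact hx hinf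
      · rintro (_ | ⟨b, x'⟩) y' heq
        · exact absurd ⟨y', by simpa using heq.symm⟩ hpre
        · simp only [List.cons_append, List.append_assoc, List.cons.injEq] at heq
          exact hmin x' y' (by simpa using heq.2)

/-- Greedy decomposition: cut at the leftmost occurrence of `u` and recurse on the rest. -/
theorem exists_cwCyclic_of_occurs {u : List R} (hu : ElementaryCycle u) {k : ℕ} {ρ : List R}
    (h : Occurs u k ρ) : ∃ m, k ≤ m ∧ CWCyclic m u ρ := by
  induction hn : ρ.length using Nat.strong_induction_on generalizing k ρ with
  | _ n ih =>
  by_cases hinf : u <:+: ρ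
  · obtain ⟨x, y, hρ, hx, hmin⟩ := exists_leftmost_occurrence hu.ne_nil hinf
    have hy : Occurs u (k - 1) y := by
      obtain _ | ⟨x', hy'⟩ := h
      · exact .zero y
      · exact hy'.of_suffix (hmin _ _ rfl)
    subst hρ
    have hlen : y.length < n := by
      have := List.length_pos_iff.mpr hu.ne_nil
      simp only [← hn, List.length_append]
      omega
    obtain ⟨m, hkm, hm⟩ := ih _ hlen hy rfl
    exact ⟨m + 1, by omega, cwCyclic_succ_iff.mpr ⟨x, y, rfl, hx, hm⟩⟩
  · refine ⟨0, ?_, cwCyclic_zero_iff.mpr ⟨hu, hinf⟩⟩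
    obtain _ | ⟨x, -⟩ := h
    · rfl
    · exact absurd ⟨x, _, rfl⟩ hinf

/-- `(c,w)`-cyclicity forces `c ≤ |ρ|`, so the search bound loses nothing. -/
noncomputable def cyclicDegree (ρ : List R) : ℕ :=
  Nat.findGreatest (fun k => ∃ w, CWCyclic k w ρ) ρ.length

theorem cyclicDegree_le_length (ρ : List R) : cyclicDegree ρ ≤ ρ.length :=
  Nat.findGreatest_le _

theorem CWCyclic.le_cyclicDegree {k : ℕ} {w ρ : List R} (h : CWCyclic k w ρ) :
    k ≤ cyclicDegree ρ :=
  Nat.le_findGreatest h.le_length ⟨w, h⟩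

theorem exists_cwCyclic_cyclicDegree {ρ : List R} (hρ : ρ ≠ []) :
    ∃ w, CWCyclic (cyclicDegree ρ) w ρ := by
  obtain ⟨r, -, rfl⟩ := List.exists_cons_of_ne_nil hρ
  obtain ⟨m, -, hm⟩ := exists_cwCyclic_of_occurs (elementaryCycle_pair r) (.zero (r :: _))
  exact Nat.findGreatest_spec (P := fun k => ∃ w, CWCyclic k w _) hm.le_length ⟨_, hm⟩

theorem cCyclic_cyclicDegree {ρ : List R} (hρ : ρ ≠ []) : CCyclic (cyclicDegree ρ) ρ :=
  ⟨exists_cwCyclic_cyclicDegree hρ, fun _ hc w hw => absurd hw.le_cyclicDegree (by omega)⟩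

theorem CCyclic.le_cyclicDegree {c : ℕ} {ρ : List R} (h : CCyclic c ρ) :
    c ≤ cyclicDegree ρ := by
  obtain ⟨⟨_, hw⟩, -⟩ := h
  exact hw.le_cyclicDegree

theorem cyclicDegree_cons_le (r : R) (ρ : List R) :
    cyclicDegree (r :: ρ) ≤ cyclicDegree ρ + 1 := by
  obtain ⟨w, hw⟩ := exists_cwCyclic_cyclicDegree (List.cons_ne_nil r ρ)
  rcases hd : cyclicDegree (r :: ρ) with _ | k
  · omega
  · rw [hd] at hw
    obtain ⟨m, hkm, hm⟩ := exists_cwCyclic_of_occurs hw.1 (hw.occurs.tail hw.1.ne_nil)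
    have := hm.le_cyclicDegree
    omega

end Cyclicity

namespace RT

variable {R : Type} {ar : R → ℕ}

def size : RT R ar → ℕ
  | node _ ts => 1 + ∑ i, size (ts i)

theorem size_child_lt {r : R} (ts : Fin (ar r) → RT R ar) (i : Fin (ar r)) :
    size (ts i) < size (node r ts) := by
  have := Finset.single_le_sum (f := fun j => size (ts j)) (fun _ _ => Nat.zero_le _)
    (Finset.mem_univ i)
  simp only [size]
  omega

theorem size_update_lt {r : R} (ts : Fin (ar r) → RT R ar) (i : Fin (ar r)) {s : RT R ar}
    (hs : size s < size (ts i)) : size (node r (Function.update ts i s)) < size (node r ts) := by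
  have : ∑ j, size (Function.update ts i s j) < ∑ j, size (ts j) := by
    refine Finset.sum_lt_sum (fun j _ => ?_) ⟨i, Finset.mem_univ i, by simpa using hs⟩
    rcases eq_or_ne j i with rfl | hj
    · simpa using hs.le
    · simp [Function.update_of_ne hj]
  simp only [size]
  omega

theorem finite_setOf_size_lt [Finite R] (n : ℕ) : {t : RT R ar | size t < n}.Finite := by
  induction n with
  | zero => simp
  | succ n ih =>
    have : Finite {t : RT R ar // size t < n} := ih.to_subtype
    refine (Set.finite_range fun z : Σ r : R, Fin (ar r) → {t : RT R ar // size t < n} =>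
      node z.1 fun i => (z.2 i).1).subset ?_
    rintro ⟨r, ts⟩ ht
    have hlt : ∀ i, size (ts i) < n := fun i => by
      have := size_child_lt ts i
      simp only [Set.mem_ofPred_eq] at ht
      omega
    exact ⟨⟨r, fun i => ⟨ts i, hlt i⟩⟩, rfl⟩

theorem subAt_cons {r : R} (ts : Fin (ar r) → RT R ar) {i : ℕ} (h : i < ar r) (p : List ℕ) :
    subAt (node r ts) (i :: p) = subAt (ts ⟨i, h⟩) p := by
  simp [subAt, h]

theorem seqTo_cons {r : R} (ts : Fin (ar r) → RT R ar) {i : ℕ} (h : i < ar r) (p : List ℕ) :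
    seqTo (node r ts) (i :: p) = (seqTo (ts ⟨i, h⟩) p).map (r :: ·) := by
  simp [seqTo, h]

theorem replaceAt_cons {r : R} (ts : Fin (ar r) → RT R ar) {i : ℕ} (h : i < ar r) (p : List ℕ)
    (s : RT R ar) :
    replaceAt (node r ts) (i :: p) s =
      node r (Function.update ts ⟨i, h⟩ (replaceAt (ts ⟨i, h⟩) p s)) := by
  simp only [replaceAt]
  congr 1
  funext j
  rcases eq_or_ne j ⟨i, h⟩ with rfl | hj
  · simp
  · rw [if_neg (fun hji => hj (Fin.ext hji)), Function.update_of_ne hj]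

theorem subAt_cons_eq_none {r : R} (ts : Fin (ar r) → RT R ar) {i : ℕ} (h : ¬ i < ar r)
    (p : List ℕ) : subAt (node r ts) (i :: p) = none := by
  simp [subAt, h]

theorem size_subAt_le : ∀ {d t : RT R ar} {p : List ℕ}, subAt d p = some t → size t ≤ size d
  | d, t, [], h => by cases d; cases h; rfl
  | node r ts, t, i :: p, h => by
    by_cases hi : i < ar r
    · rw [subAt_cons ts hi] at h
      exact (size_subAt_le h).trans (size_child_lt ts _).le
    · simp [subAt_cons_eq_none ts hi] at h

theorem size_subAt_lt {d t : RT R ar} {p : List ℕ} (h : subAt d p = some t) (hp : p ≠ []) :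
    size t < size d := by
  obtain ⟨r, ts⟩ := d
  obtain _ | ⟨i, p⟩ := p
  · exact absurd rfl hp
  by_cases hi : i < ar r
  · rw [subAt_cons ts hi] at h
    exact (size_subAt_le h).trans_lt (size_child_lt ts _)
  · simp [subAt_cons_eq_none ts hi] at h

theorem size_replaceAt_lt : ∀ {d t s : RT R ar} {p : List ℕ},
    subAt d p = some t → size s < size t → size (replaceAt d p s) < size d
  | d, t, s, [], h, hs => by cases d; simp_all [subAt, replaceAt]
  | node r ts, t, s, i :: p, h, hs => by
    by_cases hi : i < ar r
    · rw [subAt_cons ts hi] at h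
      rw [replaceAt_cons ts hi]
      exact size_update_lt ts _ (size_replaceAt_lt h hs)
    · simp [subAt_cons_eq_none ts hi] at h

theorem seqTo_length : ∀ {d : RT R ar} {p : List ℕ} {l : List R},
    seqTo d p = some l → l.length = p.length + 1
  | node r ts, [], l, h => by cases h; rfl
  | node r ts, i :: p, l, h => by
    by_cases hi : i < ar r
    · rw [seqTo_cons ts hi, Option.map_eq_some_iff] at h
      obtain ⟨l, hl, rfl⟩ := h
      simp [seqTo_length hl]
    · simp [seqTo, hi] at h

theorem ne_nil_of_seqTo {d : RT R ar} {p : List ℕ} {l : List R} (h : seqTo d p = some l) :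
    l ≠ [] :=
  List.ne_nil_of_length_pos (by rw [seqTo_length h]; omega)

theorem head?_of_seqTo {d : RT R ar} {p : List ℕ} {l : List R} (h : seqTo d p = some l) :
    l.head? = some d.rootRule := by
  obtain ⟨r, ts⟩ := d
  obtain _ | ⟨i, p⟩ := p
  · cases h; rfl
  by_cases hi : i < ar r
  · rw [seqTo_cons ts hi, Option.map_eq_some_iff] at h
    obtain ⟨l, -, rfl⟩ := h
    rfl
  · simp [seqTo, hi] at h

theorem getLast?_of_seqTo : ∀ {d t : RT R ar} {p : List ℕ} {l : List R},
    seqTo d p = some l → subAt d p = some t → l.getLast? = some t.rootRule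
  | node r ts, t, [], l, h, ht => by cases h; cases ht; rfl
  | node r ts, t, i :: p, l, h, ht => by
    by_cases hi : i < ar r
    · rw [seqTo_cons ts hi, Option.map_eq_some_iff] at h
      rw [subAt_cons ts hi] at ht
      obtain ⟨l, hl, rfl⟩ := h
      obtain ⟨a, l, rfl⟩ := List.exists_cons_of_ne_nil (ne_nil_of_seqTo hl)
      rw [List.getLast?_cons_cons]
      exact getLast?_of_seqTo hl ht
    · simp [seqTo, hi] at h

theorem exists_seqTo_of_subAt : ∀ {d t : RT R ar} {p : List ℕ},
    subAt d p = some t → ∃ l, seqTo d p = some l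
  | node r ts, t, [], _ => ⟨[r], rfl⟩
  | node r ts, t, i :: p, h => by
    by_cases hi : i < ar r
    · rw [subAt_cons ts hi] at h
      obtain ⟨l, hl⟩ := exists_seqTo_of_subAt h
      exact ⟨r :: l, by rw [seqTo_cons ts hi, hl]; rfl⟩
    · simp [subAt_cons_eq_none ts hi] at h

theorem exists_leafAt (d : RT R ar) : ∃ p, LeafAt d p := by
  induction d with
  | node r ts ih =>
    by_cases hr : ar r = 0
    · exact ⟨[], node r ts, rfl, hr⟩
    · obtain ⟨p, t, ht, htr⟩ := ih ⟨0, Nat.pos_of_ne_zero hr⟩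
      exact ⟨0 :: p, t, by rwa [subAt_cons ts], htr⟩

end RT

section WellSorted

variable {N R : Type} {lhs : R → N} {rhs : R → List N}

theorem WellSorted.subAt : ∀ {d t : RT R fun r => (rhs r).length} {p : List ℕ},
    WellSorted lhs rhs d → RT.subAt d p = some t → WellSorted lhs rhs t
  | d, t, [], hd, h => by cases d; simp_all [RT.subAt]
  | .node r ts, t, i :: p, hd, h => by
    by_cases hi : i < (rhs r).length
    · rw [RT.subAt, dif_pos hi] at h
      cases hd with
      | node _ _ _ hrec => exact (hrec _).subAt h
    · simp [RT.subAt, hi] at h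

theorem WellSorted.update {r : R} {ts : Fin (rhs r).length → RT R fun r => (rhs r).length}
    {s : RT R fun r => (rhs r).length} (hd : WellSorted lhs rhs (.node r ts))
    (hs : WellSorted lhs rhs s) (i : Fin (rhs r).length)
    (hsort : lhs s.rootRule = lhs (ts i).rootRule) :
    WellSorted lhs rhs (.node r (Function.update ts i s)) := by
  cases hd with
  | node _ _ hsorts hrec =>
    refine .node r _ (fun j => ?_) (fun j => ?_) <;> rcases eq_or_ne j i with rfl | hj
    · simpa [hsort] using hsorts j
    · simpa [Function.update_of_ne hj] using hsorts j
    · simpa using hs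
    · simpa [Function.update_of_ne hj] using hrec j

theorem WellSorted.replaceAt : ∀ {d t s : RT R fun r => (rhs r).length} {p : List ℕ},
    WellSorted lhs rhs d → RT.subAt d p = some t → WellSorted lhs rhs s →
    lhs s.rootRule = lhs t.rootRule →
    WellSorted lhs rhs (RT.replaceAt d p s) ∧ lhs (RT.replaceAt d p s).rootRule = lhs d.rootRule
  | d, t, s, [], _, h, hs, hsort => by cases d; simp_all [RT.subAt, RT.replaceAt]
  | .node r ts, t, s, i :: p, hd, h, hs, hsort => by
    by_cases hi : i < (rhs r).length
    · rw [RT.subAt, dif_pos hi] at h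
      rw [RT.replaceAt_cons (ar := fun r => (rhs r).length) ts hi]
      have hchild : WellSorted lhs rhs (ts ⟨i, hi⟩) :=
        hd.subAt (p := [i]) (by simp [RT.subAt, hi])
      obtain ⟨hws, hroot⟩ := hchild.replaceAt h hs hsort
      exact ⟨hd.update hws _ hroot, rfl⟩
    · simp [RT.subAt, hi] at h

end WellSorted

section Cut

variable {N R : Type} {lhs : R → N} {rhs : R → List N}

/-- Both ends of an elementary cycle carry the same rule, so the cut preserves sorts. -/
theorem WellSorted.of_cutW {w : List R} {d d' : RT R fun r => (rhs r).length}
    (hw : ElementaryCycle w) (hd : WellSorted lhs rhs d) (hcut : CutW w d d') :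
    WellSorted lhs rhs d' ∧ lhs d'.rootRule = lhs d.rootRule ∧ d'.size < d.size := by
  obtain ⟨p, q, t, s, ht, hs, hq, rfl⟩ := hcut
  have hroot : s.rootRule = t.rootRule := by
    have := hw.2.1
    rw [RT.head?_of_seqTo hq, RT.getLast?_of_seqTo hq hs] at this
    exact (Option.some_injective _ this).symm
  have hqne : q ≠ [] := by
    rintro rfl
    have := RT.seqTo_length hq
    have := hw.1
    simp_all
  have hst := RT.size_subAt_lt hs hqne
  obtain ⟨hws, hsort⟩ := hd.replaceAt ht ((hd.subAt ht).subAt hs) (by rw [hroot])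
  exact ⟨hws, hsort, RT.size_replaceAt_lt ht hst⟩

theorem WellSorted.of_mem_cotreesW {w : List R} {d d' : RT R fun r => (rhs r).length}
    (hw : ElementaryCycle w) (hd : WellSorted lhs rhs d) (h : d' ∈ cotreesW w d) :
    WellSorted lhs rhs d' ∧ lhs d'.rootRule = lhs d.rootRule ∧ d'.size < d.size := by
  induction h with
  | single hcut => exact hd.of_cutW hw hcut
  | tail _ hcut ih =>
    obtain ⟨hws, hsort, hsize⟩ := ih
    obtain ⟨hws', hsort', hsize'⟩ := hws.of_cutW hw hcut
    exact ⟨hws', hsort'.trans hsort, hsize'.trans hsize⟩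

end Cut

section CyclicTrees

variable {R : Type} {ar : R → ℕ}

theorem TreeC.cyclicDegree_le {c : ℕ} {d : RT R ar} (h : TreeC c d) {p : List ℕ} {ρ : List R}
    (hp : RT.LeafAt d p) (hρ : RT.seqTo d p = some ρ) : cyclicDegree ρ ≤ c := by
  by_contra! hlt
  exact h.2 _ hlt p ⟨hp, ρ, hρ, cCyclic_cyclicDegree (RT.ne_nil_of_seqTo hρ)⟩

/-- Otherwise `d` would be `c'`-cyclic for `c'` the largest cyclic degree of its leaves. -/
theorem exists_leaf_lt_cyclicDegree {c : ℕ} {d : RT R ar} (hc : ¬ ∃ c' ≤ c, TreeC c' d) :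
    ∃ p ρ, RT.LeafAt d p ∧ RT.seqTo d p = some ρ ∧ c < cyclicDegree ρ := by
  by_contra! h
  let P k := ∃ p ρ, RT.LeafAt d p ∧ RT.seqTo d p = some ρ ∧ cyclicDegree ρ = k
  obtain ⟨p, t, ht, htr⟩ := d.exists_leafAt
  obtain ⟨ρ, hρ⟩ := RT.exists_seqTo_of_subAt ht
  obtain ⟨pm, ρm, hpm, hρm, hm⟩ : P (Nat.findGreatest P c) :=
    Nat.findGreatest_spec (h p ρ ⟨t, ht, htr⟩ hρ) ⟨p, ρ, ⟨t, ht, htr⟩, hρ, rfl⟩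
  refine hc ⟨_, Nat.findGreatest_le c,
    ⟨pm, hpm, ρm, hρm, hm ▸ cCyclic_cyclicDegree (RT.ne_nil_of_seqTo hρm)⟩, ?_⟩
  rintro c' hc' p' ⟨hp', ρ', hρ', hcyc⟩
  have := Nat.le_findGreatest (P := P) (h p' ρ' hp' hρ') ⟨p', ρ', hp', hρ', rfl⟩
  have := hcyc.le_cyclicDegree
  omega

/-- A leaf of cyclic degree `> c` has degree `> c + 1`, and dropping the root lowers it by at
most one. -/
theorem exists_child_not_treeC {c : ℕ} {r : R} {ts : Fin (ar r) → RT R ar}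
    (hc : ¬ ∃ c' ≤ c, TreeC c' (.node r ts))
    (hcyc : ¬ ∃ w p, LeafCW (c + 1) w (.node r ts) p) :
    ∃ i, ¬ ∃ c' ≤ c, TreeC c' (ts i) := by
  obtain ⟨p, ρ, hp, hρ, hdeg⟩ := exists_leaf_lt_cyclicDegree hc
  have hdeg' : c + 1 < cyclicDegree ρ := by
    obtain ⟨w, hw⟩ := exists_cwCyclic_cyclicDegree (RT.ne_nil_of_seqTo hρ)
    by_contra! hle
    exact hcyc ⟨w, p, hp, ρ, hρ, (show cyclicDegree ρ = c + 1 by omega) ▸ hw⟩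
  obtain _ | ⟨i, p⟩ := p
  · have := cyclicDegree_le_length ρ
    rw [RT.seqTo_length hρ] at this
    simp at this
    omega
  obtain ⟨t, ht, htleaf⟩ := hp
  by_cases hi : i < ar r
  swap
  · simp [RT.subAt_cons_eq_none ts hi] at ht
  rw [RT.subAt_cons ts hi] at ht
  rw [RT.seqTo_cons ts hi, Option.map_eq_some_iff] at hρ
  obtain ⟨ρ', hρ', rfl⟩ := hρ
  refine ⟨⟨i, hi⟩, fun ⟨c', hc', htree⟩ => ?_⟩
  have := htree.cyclicDegree_le ⟨t, ht, htleaf⟩ hρ'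
  have := cyclicDegree_cons_le r ρ'
  omega

end CyclicTrees

section Absorption

variable {α β K : Type*} [AddCommMonoid K] {f : α → K}

def AbsorbedBy (f : α → K) (G : Finset α) (x : K) : Prop :=
  x + ∑ a ∈ G, f a = ∑ a ∈ G, f a

def AbsorbedWithin (S : Set α) (f : α → K) (x : K) : Prop :=
  ∃ G : Finset α, ↑G ⊆ S ∧ AbsorbedBy f G x

namespace AbsorbedBy

variable {F G : Finset α} {x : K}

theorem mono (h : AbsorbedBy f G x) (hGH : G ⊆ F) : AbsorbedBy f F x := by
  unfold AbsorbedBy at *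
  rw [← Finset.sum_sdiff hGH, add_left_comm, h]

theorem sum {s : Finset β} {g : β → K} (h : ∀ b ∈ s, AbsorbedBy f G (g b)) :
    AbsorbedBy f G (∑ b ∈ s, g b) := by
  induction s using Finset.induction_on with
  | empty => simp [AbsorbedBy]
  | insert b s hb ih =>
    unfold AbsorbedBy at *
    rw [Finset.sum_insert hb, add_assoc, ih fun b' hb' => h b' (Finset.mem_insert_of_mem hb'),
      h b (Finset.mem_insert_self b s)]

theorem trans (hx : AbsorbedBy f F x) (hF : ∀ e ∈ F, e ∉ G → AbsorbedBy f G (f e)) :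
    AbsorbedBy f G x := by
  have hrest : AbsorbedBy f G (∑ e ∈ F \ G, f e) :=
    sum fun e he => hF e (Finset.sdiff_subset he) (Finset.mem_sdiff.mp he).2
  have hunion : ∑ e ∈ F ∪ G, f e = ∑ e ∈ F \ G, f e + ∑ e ∈ G, f e := by
    rw [← Finset.sum_sdiff Finset.subset_union_right, Finset.union_sdiff_right]
  have hxFG : AbsorbedBy f (F ∪ G) x := hx.mono Finset.subset_union_left
  unfold AbsorbedBy at *
  rw [← hrest, ← hunion, hxFG]

theorem map {L : Type*} [AddCommMonoid L] (φ : K →+ L) (h : AbsorbedBy f G x) :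
    AbsorbedBy (fun a => φ (f a)) G (φ x) := by
  unfold AbsorbedBy at *
  rw [← map_sum, ← map_add, h]

theorem image {g : β → α} (hg : Function.Injective g) {G : Finset β}
    (h : AbsorbedBy (fun b => f (g b)) G x) : AbsorbedBy f (G.image g) x := by
  unfold AbsorbedBy at *
  rwa [Finset.sum_image hg.injOn]

end AbsorbedBy

namespace AbsorbedWithin

variable {S T : Set α} {x : K}

theorem mono (h : AbsorbedWithin S f x) (hST : S ⊆ T) : AbsorbedWithin T f x :=
  let ⟨G, hGS, hG⟩ := h
  ⟨G, hGS.trans hST, hG⟩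

theorem exists_common {s : Finset β} {g : β → K} (h : ∀ b ∈ s, AbsorbedWithin S f (g b)) :
    ∃ G : Finset α, ↑G ⊆ S ∧ ∀ b ∈ s, AbsorbedBy f G (g b) := by
  choose! G hGS hG using h
  refine ⟨s.biUnion G, by simpa using hGS, fun b hb => (hG b hb).mono ?_⟩
  exact Finset.subset_biUnion_of_mem G hb

theorem sum {s : Finset β} {g : β → K} (h : ∀ b ∈ s, AbsorbedWithin S f (g b)) :
    AbsorbedWithin S f (∑ b ∈ s, g b) :=
  let ⟨G, hGS, hG⟩ := exists_common h
  ⟨G, hGS, AbsorbedBy.sum hG⟩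

/-- The absorber: the members of `F` inside `S` together with the absorbers of the others. -/
theorem of_absorbedBy {F : Finset α} (hx : AbsorbedBy f F x)
    (hF : ∀ e ∈ F, e ∉ S → AbsorbedWithin S f (f e)) : AbsorbedWithin S f x := by
  obtain ⟨G, hGS, hG⟩ := exists_common (s := F.filter (· ∉ S)) fun e he =>
    hF e (Finset.mem_filter.mp he).1 (Finset.mem_filter.mp he).2
  refine ⟨G ∪ F.filter (· ∈ S), ?_, hx.trans fun e heF heG => (hG e ?_).mono ?_⟩
  · rw [Finset.coe_union]
    exact Set.union_subset hGS fun e he => (Finset.mem_filter.mp he).2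
  · exact Finset.mem_filter.mpr
      ⟨heF, fun heS => heG (Finset.mem_union_right _ (Finset.mem_filter.mpr ⟨heF, heS⟩))⟩
  · exact Finset.subset_union_left

theorem add_finsum_mem (h : AbsorbedWithin S f x) (hS : (S ∩ Function.support f).Finite) :
    x + ∑ᶠ a ∈ S, f a = ∑ᶠ a ∈ S, f a := by
  obtain ⟨G, hGS, hG⟩ := h
  have hsum : ∑ᶠ a ∈ S, f a = ∑ a ∈ G ∪ hS.toFinset, f a := by
    refine finsum_mem_eq_sum_of_inter_support_eq f (Set.ext fun a => ?_)
    simp only [Set.mem_inter_iff, Finset.coe_union, Set.mem_union, Finset.mem_coe,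
      Set.Finite.mem_toFinset]
    constructor
    · exact fun ⟨ha, hf⟩ => ⟨Or.inr ⟨ha, hf⟩, hf⟩
    · rintro ⟨ha | ha, hf⟩
      · exact ⟨hGS ha, hf⟩
      · exact ⟨ha.1, hf⟩
  rw [hsum]
  exact hG.mono Finset.subset_union_left

end AbsorbedWithin

end Absorption

section Weights

variable {K : Type} [AddCommMonoid K] {Ω : ∀ n : ℕ, Set ((Fin n → K) → K)}

def DistributiveOps.updateAddHom (hΩ : DistributiveOps Ω) {n : ℕ} {ω : (Fin n → K) → K}
    (hω : ω ∈ Ω n) (x : Fin n → K) (i : Fin n) : K →+ K where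
  toFun a := ω (Function.update x i a)
  map_zero' := (hΩ n ω hω).2 _ ⟨i, Function.update_self i 0 x⟩
  map_add' a b := (hΩ n ω hω).1 x i a b

variable {R : Type} {ar : R → ℕ} {wt : ∀ r : R, (Fin (ar r) → K) → K}

omit [AddCommMonoid K] in
theorem wtval_update (r : R) (ts : Fin (ar r) → RT R ar) (i : Fin (ar r)) (s : RT R ar) :
    wtval wt (.node r (Function.update ts i s)) =
      wt r (Function.update (fun j => wtval wt (ts j)) i (wtval wt s)) := by
  simp only [wtval]
  congr 1
  funext j
  exact Function.apply_update (fun _ t => wtval wt t) ts i s j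

theorem absorbedBy_grafts (hΩ : DistributiveOps Ω) (hwt : ∀ r, wt r ∈ Ω (ar r)) {r : R}
    (ts : Fin (ar r) → RT R ar) (i : Fin (ar r)) {G : Finset (RT R ar)}
    (hG : AbsorbedBy (wtval wt) G (wtval wt (ts i))) :
    AbsorbedBy (wtval wt) (G.image fun s => .node r (Function.update ts i s))
      (wtval wt (.node r ts)) := by
  let φ := hΩ.updateAddHom (hwt r) (fun j => wtval wt (ts j)) i
  have hinj : Function.Injective fun s => RT.node r (Function.update ts i s) :=
    fun s s' h => Function.update_injective ts i (eq_of_heq (RT.node.inj h).2)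
  refine AbsorbedBy.image hinj ?_
  have hd : wtval wt (.node r ts) = φ (wtval wt (ts i)) := by
    show wt r _ = wt r _
    rw [Function.update_eq_self]
  have hgraft : ∀ s, wtval wt (.node r (Function.update ts i s)) = φ (wtval wt s) :=
    wtval_update r ts i
  simpa only [hd, hgraft] using hG.map φ

end Weights

section Closed

variable {N R K : Type} [AddCommMonoid K] {lhs : R → N} {rhs : R → List N}
  {wt : ∀ r : R, (Fin (rhs r).length → K) → K} {c : ℕ}

theorem exists_absorbedBy_cotreesW [Finite R] (hclosed : CClosed lhs rhs wt c)
    {d : RT R fun r => (rhs r).length} (hd : WellSorted lhs rhs d) {w : List R} {p : List ℕ}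
    (hp : LeafCW (c + 1) w d p) :
    ∃ F : Finset (RT R fun r => (rhs r).length),
      (∀ e ∈ F, WellSorted lhs rhs e ∧ lhs e.rootRule = lhs d.rootRule ∧
        e.size < d.size) ∧
      AbsorbedBy (wtval wt) F (wtval wt d) := by
  obtain ⟨-, -, hw, -⟩ := hp.2
  have hfin : (cotreesW w d).Finite :=
    (RT.finite_setOf_size_lt d.size).subset fun e he => (hd.of_mem_cotreesW hw he).2.2
  refine ⟨hfin.toFinset, fun e he => hd.of_mem_cotreesW hw (hfin.mem_toFinset.mp he), ?_⟩
  have := hclosed d hd w hw ⟨p, hp⟩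
  rwa [finsum_mem_eq_finite_toFinset_sum _ hfin] at this

theorem absorbedWithin_of_notMem_TRcset [Finite R] {Ω : ∀ n : ℕ, Set ((Fin n → K) → K)}
    (hΩ : DistributiveOps Ω) (hwt : ∀ r, wt r ∈ Ω (rhs r).length)
    (hclosed : CClosed lhs rhs wt c) {d : RT R fun r => (rhs r).length}
    (hd : WellSorted lhs rhs d) (hc : d ∉ TRcset lhs rhs c) :
    AbsorbedWithin (TRcset lhs rhs c ∩ TRA lhs rhs (lhs d.rootRule) ∩ {e | e.size < d.size})
      (wtval wt) (wtval wt d) := by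
  induction hn : d.size using Nat.strong_induction_on generalizing d with
  | _ n ih =>
  obtain ⟨F, hF, hFd⟩ : ∃ F : Finset (RT R fun r => (rhs r).length),
      (∀ e ∈ F, WellSorted lhs rhs e ∧ lhs e.rootRule = lhs d.rootRule ∧ e.size < n) ∧
      AbsorbedBy (wtval wt) F (wtval wt d) := by
    subst hn
    by_cases hcyc : ∃ w p, LeafCW (c + 1) w d p
    · obtain ⟨w, p, hp⟩ := hcyc
      exact exists_absorbedBy_cotreesW hclosed hd hp
    obtain ⟨r, ts⟩ := d
    obtain ⟨i, hi⟩ := exists_child_not_treeC (fun h => hc ⟨hd, h⟩) hcyc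
    have hchild : WellSorted lhs rhs (ts i) := by
      cases hd with
      | node _ _ _ hrec => exact hrec i
    obtain ⟨G, hGS, hG⟩ :=
      ih _ (RT.size_child_lt (ar := fun r => (rhs r).length) ts i) hchild (fun h => hi h.2) rfl
    refine ⟨_, ?_, absorbedBy_grafts hΩ hwt ts i hG⟩
    simp only [Finset.mem_image]
    rintro _ ⟨s, hs, rfl⟩
    obtain ⟨⟨-, hsws, hsort⟩, hsize⟩ := hGS hs
    exact ⟨hd.update hsws i hsort, rfl,
      RT.size_update_lt (ar := fun r => (rhs r).length) ts i hsize⟩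
  refine AbsorbedWithin.of_absorbedBy hFd fun e he heS => ?_
  obtain ⟨hews, hesort, hesize⟩ := hF e he
  have hec : e ∉ TRcset lhs rhs c := fun hec => heS ⟨⟨hec, hews, hesort⟩, hesize⟩
  have := ih _ hesize hews hec rfl
  rw [hesort] at this
  exact this.mono fun x ⟨hx, hxe⟩ => ⟨hx, lt_trans hxe hesize⟩

end Closed

theorem outside_trees_spawned_general {N R K : Type} [Fintype R]
    [AddCommMonoid K]
    (Ω : ∀ n : ℕ, Set ((Fin n → K) → K)) (hΩd : DistributiveOps Ω)
    (lhs : R → N) (rhs : R → List N)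
    (wt : ∀ r : R, (Fin (rhs r).length → K) → K) (hwt : ∀ r : R, wt r ∈ Ω (rhs r).length)
    (c : ℕ) (hclosed : CClosed lhs rhs wt c) :
    ∀ (l : ℕ) (A : N) (B : Set (RT R fun r => (rhs r).length)),
      B ⊆ TRA lhs rhs A \ TRcset lhs rhs c → B.Finite → B.ncard = l →
      (∑ᶠ d ∈ TRcset lhs rhs c ∩ TRA lhs rhs A, wtval wt d)
        = ∑ᶠ d ∈ (TRcset lhs rhs c ∩ TRA lhs rhs A) ∪ B, wtval wt d := by
  intro l A B hB hBfin _
  by_cases hT : (TRcset lhs rhs c ∩ TRA lhs rhs A ∩ Function.support (wtval wt)).Finite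
  · have hdisj : Disjoint (TRcset lhs rhs c ∩ TRA lhs rhs A) B :=
      Set.disjoint_left.mpr fun d hdT hdB => (hB hdB).2 hdT.1
    rw [finsum_mem_union' hdisj hT (hBfin.inter_of_left _),
      finsum_mem_eq_finite_toFinset_sum _ hBfin, add_comm]
    refine ((AbsorbedWithin.sum fun d hd => ?_).add_finsum_mem hT).symm
    obtain ⟨⟨hdws, hdA⟩, hdc⟩ := hB (hBfin.mem_toFinset.mp hd)
    rw [← hdA]
    exact (absorbedWithin_of_notMem_TRcset hΩd hwt hclosed hdws hdc).mono Set.inter_subset_left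
  -- With infinite support both `finsum`s take the junk value `0`.
  · have hT' : (TRcset lhs rhs c ∩ TRA lhs rhs A ∩ Function.support (wtval wt)).Infinite := hT
    rw [finsum_mem_eq_zero_of_infinite hT', finsum_mem_eq_zero_of_infinite
      (hT'.mono (Set.inter_subset_inter_left _ Set.subset_union_left))]

/-- In a `c`-closed weighted system, any finite set `B` of trees of sort `A` outside
`T_R^{(c)}` may be added to the finite `⊕`-summation over `(T_R^{(c)})_A` without
changing its value. -/
theorem outside_trees_spawned {N R K : Type} [Fintype N] [Nonempty N] [Fintype R]
    [AddCommMonoid K]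
    (S : InfSum K) (hdc : S.DComplete)
    (Ω : ∀ n : ℕ, Set ((Fin n → K) → K)) (hΩ0 : HasZeroOps Ω) (hΩd : DistributiveOps Ω)
    (lhs : R → N) (rhs : R → List N)
    (wt : ∀ r : R, (Fin (rhs r).length → K) → K) (hwt : ∀ r : R, wt r ∈ Ω (rhs r).length)
    (c : ℕ) (hclosed : CClosed lhs rhs wt c) :
    ∀ (l : ℕ) (A : N) (B : Set (RT R fun r => (rhs r).length)),
      B ⊆ TRA lhs rhs A \ TRcset lhs rhs c → B.Finite → B.ncard = l →
      (∑ᶠ d ∈ TRcset lhs rhs c ∩ TRA lhs rhs A, wtval wt d)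
        = ∑ᶠ d ∈ (TRcset lhs rhs c ∩ TRA lhs rhs A) ∪ B, wtval wt d :=
  outside_trees_spawned_general Ω hΩd lhs rhs wt hwt c hclosed
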